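/- Let a₁, a₂ be positive integers coprime to a positive integer b. Then 12·s(a₁,b) - 12·s(a₂,b) is an integer if and only if b divides (a₁-a₂)(a₁a₂-1). -/

import Mathlib

/-- The sawtooth function ((x)) = x - ⌊x⌋ - 1/2 for non-integer x, and 0 for integer x. -/
def saw (x : ℚ) : ℚ := if x.den = 1 then 0 else x - ⌊x⌋ - 1/2

/-- The Dedekind sum s(a,b) = Σ_{k=1}^{b-1} ((k/b))((ka/b)). -/
def dedekindSum (a b : ℕ) : ℚ :=
  ∑ k ∈ Finset.range b, saw ((k : ℚ) / b) * saw ((k * a : ℚ) / b)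

/-- I(a,b): the number of inversions of the permutation x ↦ ax mod b on {0,...,b-1}. -/
def inv' (a b : ℕ) : ℕ :=
  (((Finset.range b) ×ˢ (Finset.range b)).filter
    (fun p => p.1 < p.2 ∧ (a * p.2) % b < (a * p.1) % b)).card

/-!
With `r k = k * a % b`, the Dedekind sum is `s(a,b) = (∑ k * r k) / b² - (b - 1) / 4`, so
`12 s(a₁,b) - 12 s(a₂,b) = 12 (S₁ - S₂) / b²` for `S = ∑ k * r k`. Since `b ∣ k a - r k`, squaring
gives `2 a k r k ≡ a² k² + (r k)² (mod b²)`, and as `k ↦ r k` permutes the residues,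
`2 a S ≡ (a² + 1) ∑ k² (mod b²)`. Eliminating between `a₁` and `a₂` with `6 ∑ k² = b (b-1) (2b-1)`
gives `a₁ a₂ · 12 (S₁ - S₂) ≡ b (b-1) (2b-1) (a₁ - a₂) (a₁ a₂ - 1) (mod b²)`, and both `a₁ a₂` and
`(b-1) (2b-1)` are prime to `b`.
-/

open Finset

theorem Nat.Coprime.sum_range_comp_mul_mod {M : Type*} [AddCommMonoid M] {a b : ℕ}
    (h : a.Coprime b) (f : ℕ → M) :
    ∑ k ∈ range b, f (k * a % b) = ∑ k ∈ range b, f k := by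
  rcases b.eq_zero_or_pos with rfl | hb
  · simp
  have hmaps : Set.MapsTo (· * a % b) (range b : Set ℕ) (range b) := fun _ _ =>
    mem_range.2 (Nat.mod_lt _ hb)
  have hinj : Set.InjOn (· * a % b) (range b : Set ℕ) := fun k hk j hj hkj =>
    (Nat.ModEq.cancel_right_of_coprime h.symm hkj).eq_of_lt_of_lt (mem_range.1 hk)
      (mem_range.1 hj)
  exact sum_nbij _ hmaps hinj (surjOn_of_injOn_of_card_le _ hmaps hinj le_rfl) fun _ _ => rfl

theorem exists_intCast_eq_div_iff_dvd {K : Type*} [Field K] [CharZero K] {m n : ℤ}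
    (hn : n ≠ 0) : (∃ z : ℤ, (m : K) / n = z) ↔ n ∣ m := by
  constructor
  · rintro ⟨z, hz⟩
    rw [div_eq_iff (Int.cast_ne_zero.2 hn)] at hz
    exact Dvd.intro_left z (by exact_mod_cast hz.symm)
  · rintro ⟨z, rfl⟩
    exact ⟨z, by push_cast; field_simp⟩

theorem six_mul_sum_range_sq {R : Type*} [CommRing R] (n : ℕ) :
    6 * ∑ k ∈ range n, (k : R) ^ 2 = n * (n - 1) * (2 * n - 1) := by
  induction n with
  | zero => simp
  | succ n ih =>
    rw [sum_range_succ, mul_add, ih]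
    push_cast
    ring

theorem sum_range_natCast {K : Type*} [Field K] [CharZero K] (n : ℕ) :
    ∑ k ∈ range n, (k : K) = n * (n - 1) / 2 := by
  induction n with
  | zero => simp
  | succ n ih =>
    rw [sum_range_succ, ih]
    push_cast
    ring

theorem saw_natCast_div {k b : ℕ} (hb : b ≠ 0) (hbk : ¬ b ∣ k) :
    saw (k / b) = (k % b : ℕ) / b - 1 / 2 := by
  rw [saw, if_neg (by rwa [Rat.den_div_natCast_eq_one_iff _ _ hb]),
    ← Int.fract_div_natCast_eq_div_natCast_mod, ← Int.self_sub_floor]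

/-- Only the term `k = 0` differs: there `((0)) = 0`, whereas `0 / b - 1 / 2 = -1 / 2`. -/
theorem dedekindSum_eq_sum_sub {a b : ℕ} (hb : b ≠ 0) (h : a.Coprime b) :
    dedekindSum a b =
      ∑ k ∈ range b, ((k : ℚ) / b - 1 / 2) * ((k * a % b : ℕ) / b - 1 / 2) - 1 / 4 := by
  have h0 : 0 ∈ range b := mem_range.2 (Nat.pos_of_ne_zero hb)
  have hsaw : ∀ k ∈ (range b).erase 0, saw (k / b) * saw (k * a / b) =
      ((k : ℚ) / b - 1 / 2) * ((k * a % b : ℕ) / b - 1 / 2) := by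
    intro k hk
    obtain ⟨hk0, hkb⟩ := mem_erase.1 hk
    have hbk : ¬ b ∣ k := fun hd => hk0 (Nat.eq_zero_of_dvd_of_lt hd (mem_range.1 hkb))
    rw [saw_natCast_div hb hbk, ← Nat.cast_mul,
      saw_natCast_div hb fun hd => hbk (h.symm.dvd_of_dvd_mul_right hd),
      Nat.mod_eq_of_lt (mem_range.1 hkb)]
  rw [dedekindSum, ← add_sum_erase _ _ h0, ← add_sum_erase _ _ h0, sum_congr rfl hsaw]
  simp only [saw, CharP.cast_eq_zero, zero_div, Rat.den_ofNat, ↓reduceIte, zero_mul, mul_zero,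
    Nat.zero_mod]
  ring

def mulModSum (a b : ℕ) : ℕ := ∑ k ∈ range b, k * (k * a % b)

theorem dedekindSum_eq {a b : ℕ} (hb : b ≠ 0) (h : a.Coprime b) :
    dedekindSum a b = mulModSum a b / b ^ 2 - (b - 1) / 4 := by
  have hperm : ∑ k ∈ range b, ((k * a % b : ℕ) : ℚ) = ∑ k ∈ range b, (k : ℚ) :=
    h.sum_range_comp_mul_mod (fun k => (k : ℚ))
  have hexpand : ∀ k ∈ range b, ((k : ℚ) / b - 1 / 2) * ((k * a % b : ℕ) / b - 1 / 2) =
      ((k * (k * a % b) : ℕ) : ℚ) / b ^ 2 - (k : ℚ) / (2 * b) -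
        ((k * a % b : ℕ) : ℚ) / (2 * b) + 1 / 4 := by
    intro k _
    push_cast
    field_simp
    ring
  rw [dedekindSum_eq_sum_sub hb h, sum_congr rfl hexpand, sum_add_distrib, sum_sub_distrib,
    sum_sub_distrib, ← sum_div, ← sum_div, ← sum_div, hperm, sum_range_natCast, mulModSum,
    sum_const, card_range]
  push_cast
  field_simp
  ring

theorem two_mul_mulModSum_modEq {a b : ℕ} (h : a.Coprime b) :
    2 * a * (mulModSum a b : ℤ) ≡ (a ^ 2 + 1) * ∑ k ∈ range b, (k : ℤ) ^ 2 [ZMOD b ^ 2] := by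
  have hterm : ∀ k ∈ range b, 2 * a * ((k * (k * a % b) : ℕ) : ℤ) ≡
      a ^ 2 * k ^ 2 + ((k * a % b : ℕ) : ℤ) ^ 2 [ZMOD b ^ 2] := by
    intro k _
    have hdvd : (b : ℤ) ∣ k * a - (k * a % b : ℕ) := by
      rw [Int.natCast_mod]
      push_cast
      exact (Int.mod_modEq _ _).dvd
    refine Int.modEq_iff_dvd.2 ((pow_dvd_pow_of_dvd hdvd 2).trans (dvd_of_eq ?_))
    push_cast
    ring
  calc 2 * a * (mulModSum a b : ℤ) = ∑ k ∈ range b, 2 * a * ((k * (k * a % b) : ℕ) : ℤ) := by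
        rw [mulModSum, Nat.cast_sum, mul_sum]
    _ ≡ ∑ k ∈ range b, (a ^ 2 * k ^ 2 + ((k * a % b : ℕ) : ℤ) ^ 2) [ZMOD b ^ 2] :=
        Int.ModEq.sum hterm
    _ = (a ^ 2 + 1) * ∑ k ∈ range b, (k : ℤ) ^ 2 := by
        rw [sum_add_distrib, h.sum_range_comp_mul_mod (fun k => (k : ℤ) ^ 2), ← mul_sum]
        ring

theorem mul_twelve_mulModSum_sub_modEq {a₁ a₂ b : ℕ} (h₁ : a₁.Coprime b) (h₂ : a₂.Coprime b) :
    a₁ * a₂ * (12 * ((mulModSum a₁ b : ℤ) - mulModSum a₂ b)) ≡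
      b * ((b - 1) * (2 * b - 1) * ((a₁ - a₂) * (a₁ * a₂ - 1))) [ZMOD b ^ 2] := by
  calc a₁ * a₂ * (12 * ((mulModSum a₁ b : ℤ) - mulModSum a₂ b))
        = 6 * a₂ * (2 * a₁ * mulModSum a₁ b) - 6 * a₁ * (2 * a₂ * mulModSum a₂ b) := by ring
    _ ≡ 6 * a₂ * ((a₁ ^ 2 + 1) * ∑ k ∈ range b, (k : ℤ) ^ 2)
          - 6 * a₁ * ((a₂ ^ 2 + 1) * ∑ k ∈ range b, (k : ℤ) ^ 2) [ZMOD b ^ 2] :=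
        ((two_mul_mulModSum_modEq h₁).mul_left _).sub ((two_mul_mulModSum_modEq h₂).mul_left _)
    _ = _ := by
        linear_combination ((a₁ : ℤ) - a₂) * (a₁ * a₂ - 1) * six_mul_sum_range_sq (R := ℤ) b

theorem twelve_int_iff_dvd_general (a₁ a₂ b : ℕ) (hb : 0 < b)
    (h₁ : Nat.Coprime a₁ b) (h₂ : Nat.Coprime a₂ b) :
    (∃ n : ℤ, 12 * dedekindSum a₁ b - 12 * dedekindSum a₂ b = n) ↔
      (b : ℤ) ∣ ((a₁ : ℤ) - a₂) * ((a₁ : ℤ) * a₂ - 1) := by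
  have hb' : (b : ℤ) ≠ 0 := by exact_mod_cast hb.ne'
  have hdiff : 12 * dedekindSum a₁ b - 12 * dedekindSum a₂ b =
      ((12 * ((mulModSum a₁ b : ℤ) - mulModSum a₂ b) : ℤ) : ℚ) / ((b ^ 2 : ℤ) : ℚ) := by
    rw [dedekindSum_eq hb.ne' h₁, dedekindSum_eq hb.ne' h₂]
    push_cast
    ring
  have hab : IsCoprime ((b : ℤ) ^ 2) (a₁ * a₂) :=
    ((Nat.isCoprime_iff_coprime.2 h₁.symm).mul_right
      (Nat.isCoprime_iff_coprime.2 h₂.symm)).pow_left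
  -- `(b - 1) * (2 * b - 1) = b * (2 * b - 3) + 1`
  have hbb : IsCoprime (b : ℤ) ((b - 1) * (2 * b - 1)) := ⟨-(2 * b - 3), 1, by ring⟩
  rw [hdiff, exists_intCast_eq_div_iff_dvd (pow_ne_zero 2 hb')]
  calc (b : ℤ) ^ 2 ∣ 12 * ((mulModSum a₁ b : ℤ) - mulModSum a₂ b)
      ↔ (b : ℤ) ^ 2 ∣ a₁ * a₂ * (12 * ((mulModSum a₁ b : ℤ) - mulModSum a₂ b)) :=
        ⟨fun h => h.mul_left _, hab.dvd_of_dvd_mul_left⟩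
    _ ↔ (b : ℤ) ^ 2 ∣ b * ((b - 1) * (2 * b - 1) * ((a₁ - a₂) * (a₁ * a₂ - 1))) :=
        (mul_twelve_mulModSum_sub_modEq h₁ h₂).dvd_iff
    _ ↔ (b : ℤ) ∣ (b - 1) * (2 * b - 1) * ((a₁ - a₂) * (a₁ * a₂ - 1)) := by
        rw [sq]
        exact mul_dvd_mul_iff_left hb'
    _ ↔ (b : ℤ) ∣ ((a₁ : ℤ) - a₂) * ((a₁ : ℤ) * a₂ - 1) :=
        ⟨hbb.dvd_of_dvd_mul_left, fun h => h.mul_left _⟩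

theorem twelve_int_iff_dvd (a₁ a₂ b : ℕ) (ha₁ : 0 < a₁) (ha₂ : 0 < a₂) (hb : 0 < b)
    (h₁ : Nat.Coprime a₁ b) (h₂ : Nat.Coprime a₂ b) :
    (∃ n : ℤ, 12 * dedekindSum a₁ b - 12 * dedekindSum a₂ b = n) ↔
      (b : ℤ) ∣ ((a₁ : ℤ) - a₂) * ((a₁ : ℤ) * a₂ - 1) :=
  twelve_int_iff_dvd_general a₁ a₂ b hb h₁ h₂
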